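/- Let v = (1,0,−m), m ≥ 1, in the Mukai lattice of a K3 surface, and let v₀ = (r, L, rm) ∈ v^⊥ with ⟨v₀,v₀⟩ = −2, i.e. L·L = 2r²m − 2. If L is not divisible by 2 in H^2(S,Z), then the rank-2 sublattice span_Z{v, v₀} is a primitive sublattice of the Mukai lattice. -/

import Mathlib

/-- The Mukai pairing on `ℤ ⊕ M ⊕ ℤ`. -/
def mukaiForm {R : Type} [CommRing R] {M : Type} [AddCommGroup M] [Module R M]
    (B : M →ₗ[R] M →ₗ[R] R) : (R × M × R) →ₗ[R] (R × M × R) →ₗ[R] R :=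
  LinearMap.mk₂ R (fun x y => B x.2.1 y.2.1 - x.1 * y.2.2 - y.1 * x.2.2)
    (fun x x' y => by simp [add_mul]; ring)
    (fun c x y => by simp [smul_eq_mul]; ring)
    (fun x y y' => by simp [mul_add]; ring)
    (fun c x y => by simp [smul_eq_mul]; ring)

/-! If `n • x = a • v + b • v₀` with `n ≠ 0`, it suffices to show `n ∣ b`; then `n ∣ a` by the
first coordinate and `x` is read off after cancelling `n`. Dividing `n` and `b` by their gcd
leaves coprime `n'`, `b'` with `b' • L = n' • x₂`, so `L = n' • L₀`. Since `L` is not divisible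
by `2`, `n'` is odd. Now `⟨v₀, v₀⟩ = -2` gives `n'² ∣ 2 (r²m - 1)` and the third coordinate gives
`n' ∣ 2rm`, so `n' ∣ 1`. -/

theorem IsCoprime.exists_eq_smul_of_smul_eq_smul {R M : Type*} [CommRing R] [AddCommGroup M]
    [Module R M] {n b : R} (h : IsCoprime n b) {x y : M} (hxy : b • x = n • y) :
    ∃ z, x = n • z := by
  obtain ⟨u, v, huv⟩ := h
  exact ⟨u • x + v • y, by linear_combination (norm := module) v • hxy - huv • x⟩

theorem isCoprime_two_of_eq_smul {M : Type*} [AddCommGroup M] {x z : M} {k : ℤ}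
    (hx : ¬ ∃ y : M, x = (2 : ℤ) • y) (hxz : x = k • z) : IsCoprime 2 k := by
  rw [Prime.coprime_iff_not_dvd Int.prime_two]
  rintro ⟨q, rfl⟩
  exact hx ⟨q • z, by rw [hxz, mul_smul]⟩

theorem isUnit_of_sq_dvd_of_dvd {R : Type*} [CommRing R] {k r m : R} (hk : IsCoprime 2 k)
    (hsq : k ^ 2 ∣ 2 * (r ^ 2 * m - 1)) (hrm : k ∣ 2 * (r * m)) : IsUnit k := by
  have h₁ : k ∣ r ^ 2 * m - 1 :=
    hk.symm.dvd_of_dvd_mul_left ((dvd_pow_self k two_ne_zero).trans hsq)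
  have h₂ : k ∣ r ^ 2 * m := by
    simpa [sq, mul_assoc] using (hk.symm.dvd_of_dvd_mul_left hrm).mul_left r
  exact isUnit_of_dvd_one (by simpa using dvd_sub h₂ h₁)

theorem mukaiForm_apply {R : Type} [CommRing R] {M : Type} [AddCommGroup M] [Module R M]
    (B : M →ₗ[R] M →ₗ[R] R) (x y : R × M × R) :
    mukaiForm B x y = B x.2.1 y.2.1 - x.1 * y.2.2 - y.1 * x.2.2 :=
  rfl

theorem dvd_of_add_smul_eq_smul {M : Type} [AddCommGroup M] [Module.IsTorsionFree ℤ M]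
    (B : M →ₗ[ℤ] M →ₗ[ℤ] ℤ) (m r : ℤ) {L : M} (hBLL : B L L = 2 * r ^ 2 * m - 2)
    (hL : ¬ ∃ L₀ : M, L = (2 : ℤ) • L₀) {n a b : ℤ} (hn : n ≠ 0) {x : ℤ × M × ℤ}
    (h : a • ((1 : ℤ), (0 : M), -m) + b • (r, L, r * m) = n • x) : n ∣ b := by
  obtain ⟨x₁, x₂, x₃⟩ := x
  simp only [Prod.smul_mk, Prod.mk_add_mk, Prod.mk.injEq, smul_eq_mul, smul_zero, zero_add] at h
  obtain ⟨h₁, h₂, h₃⟩ := h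
  obtain ⟨d, n', b', hd, hcop, rfl, rfl⟩ := Int.exists_gcd_one' (Int.gcd_pos_of_ne_zero_left b hn)
  rw [← Int.isCoprime_iff_gcd_eq_one] at hcop
  have hd0 : (d : ℤ) ≠ 0 := by positivity
  have hbL : b' • L = n' • x₂ :=
    smul_right_injective M hd0 (by simpa only [smul_smul, mul_comm] using h₂)
  have hrm : n' ∣ b' * (2 * (r * m)) :=
    ⟨x₃ + m * x₁, mul_left_cancel₀ hd0 (by linear_combination h₃ + m * h₁)⟩
  obtain ⟨L₀, rfl⟩ := hcop.exists_eq_smul_of_smul_eq_smul hbL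
  have hsq : n' ^ 2 ∣ 2 * (r ^ 2 * m - 1) := by
    simp only [map_smul, LinearMap.smul_apply, smul_eq_mul] at hBLL
    exact ⟨B L₀ L₀, by linear_combination -hBLL⟩
  have hunit := isUnit_of_sq_dvd_of_dvd (isCoprime_two_of_eq_smul hL rfl) hsq
    (hcop.dvd_of_dvd_mul_left hrm)
  exact hunit.mul_left_dvd.mpr (dvd_mul_left _ _)

theorem span_v_v0_primitive_general
    (m : ℤ)
    {M : Type} [AddCommGroup M] [Module ℤ M] [Module.Free ℤ M]
    (B : M →ₗ[ℤ] M →ₗ[ℤ] ℤ)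
    (r : ℤ) (L : M)
    (hv₀ : mukaiForm B ((r, L, r * m) : ℤ × M × ℤ) ((r, L, r * m) : ℤ × M × ℤ) = -2)
    (hL2 : ¬ ∃ L₀ : M, L = (2 : ℤ) • L₀) :
    ∀ (n : ℤ) (x : ℤ × M × ℤ), n ≠ 0 →
      n • x ∈ Submodule.span ℤ ({((1 : ℤ), (0 : M), -m), ((r, L, r * m) : ℤ × M × ℤ)} : Set (ℤ × M × ℤ)) →
      x ∈ Submodule.span ℤ ({((1 : ℤ), (0 : M), -m), ((r, L, r * m) : ℤ × M × ℤ)} : Set (ℤ × M × ℤ)) := by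
  obtain rfl : ‹Module ℤ M› = AddCommGroup.toIntModule M := Subsingleton.elim _ _
  have hBLL : B L L = 2 * r ^ 2 * m - 2 := by
    rw [mukaiForm_apply] at hv₀
    linear_combination hv₀
  intro n x hn hx
  obtain ⟨a, b, hab⟩ := Submodule.mem_span_pair.mp hx
  obtain ⟨c, rfl⟩ := dvd_of_add_smul_eq_smul B m r hBLL hL2 hn hab
  obtain rfl : a = n * (x.1 - c * r) := by
    have h₁ := congrArg Prod.fst hab
    simp only [Prod.fst_add, Prod.smul_fst, smul_eq_mul] at h₁
    linear_combination h₁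
  refine Submodule.mem_span_pair.mpr ⟨x.1 - c * r, c, smul_right_injective _ hn ?_⟩
  simpa only [smul_add, smul_smul] using hab

/-- let `v = (1,0,−m)` and `v₀ = (r,L,rm) ∈ v^⊥` with `⟨v₀,v₀⟩ = −2`.
If `L` is not divisible by `2` in `H²`, then `span_ℤ{v, v₀}` is a primitive
sublattice of the Mukai lattice (the quotient is torsion-free). -/
theorem span_v_v0_primitive
    (m : ℤ) (hm : 1 ≤ m)
    {M : Type} [AddCommGroup M] [Module ℤ M] [Module.Free ℤ M] [Module.Finite ℤ M]
    (B : M →ₗ[ℤ] M →ₗ[ℤ] ℤ) (hsymm : ∀ x y, B x y = B y x)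
    (r : ℤ) (L : M)
    (hv₀ : mukaiForm B ((r, L, r * m) : ℤ × M × ℤ) ((r, L, r * m) : ℤ × M × ℤ) = -2)
    (hL2 : ¬ ∃ L₀ : M, L = (2 : ℤ) • L₀) :
    ∀ (n : ℤ) (x : ℤ × M × ℤ), n ≠ 0 →
      n • x ∈ Submodule.span ℤ ({((1 : ℤ), (0 : M), -m), ((r, L, r * m) : ℤ × M × ℤ)} : Set (ℤ × M × ℤ)) →
      x ∈ Submodule.span ℤ ({((1 : ℤ), (0 : M), -m), ((r, L, r * m) : ℤ × M × ℤ)} : Set (ℤ × M × ℤ)) :=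
  span_v_v0_primitive_general m B r L hv₀ hL2
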